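/- For any natural numbers k, m and any tuple (n₁,…,n_r) of natural numbers, there exists a number R such that for any linearly ordered set X with |X| ≥ R and any family of functions fᵢ : X^{nᵢ} → Fin k for i = 1,…,r, there is a subset Y ⊆ X with |Y| ≥ m such that each fᵢ is constant on every ∼-equivalence class of Y^{nᵢ}. -/

import Mathlib

/-!
Colour each `d`-element set `A ⊆ X` by the values `f i (e_A ∘ p)`, where `e_A : Fin d ↪o X`
enumerates `A` increasingly and `p` ranges over all patterns `Fin (n i) → Fin d`. Every tuple `x`
equals `e_V ∘ p` for `V` its set of entries and a pattern `p` that depends only on the order type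
of `x`; so on a set homogeneous for these colourings simultaneously for all `d ≤ max nᵢ`, each
`f i` only sees order types. Such sets exist by the finite hypergraph Ramsey theorem, iterated
over `d`. That theorem follows from the Erdős–Rado argument: repeatedly remove the minimum `a` and
pass to a large set homogeneous for `e ↦ χ (insert a e)`, which yields an end-homogeneous
sequence, then pigeonhole on the colour each element induces on the `d`-sets above it.
-/

def OrderTypeEquiv {X : Type} [LinearOrder X] {n : ℕ} (x y : Fin n → X) : Prop :=
  ∀ i j : Fin n, i < j → ((x i < x j ↔ y i < y j) ∧ (x i = x j ↔ y i = y j))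

open Finset

universe u v

section Ramsey

variable {α : Type*} {C : Type*} {χ : Finset α → C} {d m : ℕ}

def IsHomogeneous (χ : Finset α → C) (d : ℕ) (Y : Finset α) : Prop :=
  ∀ A ⊆ Y, ∀ B ⊆ Y, #A = d → #B = d → χ A = χ B

theorem IsHomogeneous.mono {Y Z : Finset α} (h : IsHomogeneous χ d Y) (hZY : Z ⊆ Y) :
    IsHomogeneous χ d Z :=
  fun A hA B hB => h A (hA.trans hZY) B (hB.trans hZY)

theorem isHomogeneous_zero (χ : Finset α → C) (Y : Finset α) : IsHomogeneous χ 0 Y := by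
  intro A _ B _ hA hB
  rw [card_eq_zero.mp hA, card_eq_zero.mp hB]

variable [LinearOrder α]

def IsEndHomogeneous (χ : Finset α → C) (d : ℕ) (A B : Finset α) : Prop :=
  ∀ a ∈ A, IsHomogeneous (fun e => χ (insert a e)) d (B.filter (a < ·))

theorem IsEndHomogeneous.insert_of_lt {A B : Finset α} {a : α}
    (h : IsEndHomogeneous χ d A B) (hAB : A ⊆ B) (haB : ∀ b ∈ B, a < b)
    (ha : IsHomogeneous (fun e => χ (insert a e)) d B) :
    IsEndHomogeneous χ d (insert a A) (insert a B) := by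
  intro b hb
  rcases mem_insert.mp hb with rfl | hbA
  · simpa [filter_insert] using ha.mono (filter_subset _ B)
  · have hab : a < b := haB b (hAB hbA)
    simpa [filter_insert, not_lt_of_gt hab] using h b hbA

theorem IsEndHomogeneous.exists_isHomogeneous [Finite C] {A T : Finset α}
    (h : IsEndHomogeneous χ d A (A ∪ T)) (hAT : ∀ a ∈ A, ∀ t ∈ T, a < t)
    (hT : d ≤ #T) (hA : Nat.card C * m < #A) :
    ∃ Y ⊆ A, m ≤ #Y ∧ IsHomogeneous χ (d + 1) Y := by
  classical
  have := Fintype.ofFinite C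
  obtain ⟨e, heT, he⟩ := exists_subset_card_eq hT
  obtain ⟨c, -, hc⟩ := Finset.exists_lt_card_fiber_of_mul_lt_card_of_maps_to (s := A) (t := univ)
    (f := fun a => χ (insert a e)) (n := m) (fun _ _ => mem_univ _)
    (by rwa [card_univ, ← Nat.card_eq_fintype_card])
  refine ⟨A.filter (fun a => χ (insert a e) = c), filter_subset _ _, hc.le, ?_⟩
  -- By end-homogeneity, a `(d+1)`-set gets the colour its minimum induces on `e`.
  suffices key : ∀ B ⊆ A.filter (fun a => χ (insert a e) = c), #B = d + 1 → χ B = c from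
    fun B hB B' hB' hBd hB'd => (key B hB hBd).trans (key B' hB' hB'd).symm
  intro B hB hBd
  have hne : B.Nonempty := card_pos.mp (by omega)
  have haB := min'_mem B hne
  obtain ⟨haA, hac⟩ := mem_filter.mp (hB haB)
  have hBA : B ⊆ A := hB.trans (filter_subset _ _)
  have hrest : B.erase (B.min' hne) ⊆ (A ∪ T).filter (B.min' hne < ·) := fun z hz =>
    mem_filter.mpr ⟨mem_union_left _ (hBA (mem_of_mem_erase hz)), min'_lt_of_mem_erase_min' _ _ hz⟩
  have he' : e ⊆ (A ∪ T).filter (B.min' hne < ·) := fun z hz =>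
    mem_filter.mpr ⟨mem_union_right _ (heT hz), hAT _ haA z (heT hz)⟩
  have hcard : #(B.erase (B.min' hne)) = d := by rw [card_erase_of_mem haB]; omega
  rw [← insert_erase haB, ← hac]
  exact h _ haA _ hrest _ he' hcard he

end Ramsey

section RamseyProperty

variable {C : Type*} {d : ℕ}

variable (C) in
def RamseyProperty (d : ℕ) : Prop :=
  ∀ m : ℕ, ∃ N : ℕ, ∀ (α : Type u) [LinearOrder α] (S : Finset α) (χ : Finset α → C),
    N ≤ #S → ∃ Y ⊆ S, m ≤ #Y ∧ IsHomogeneous χ d Y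

theorem RamseyProperty.exists_isEndHomogeneous (h : RamseyProperty.{u} C d)
    (L t : ℕ) : ∃ M : ℕ, ∀ (α : Type u) [LinearOrder α] (S : Finset α) (χ : Finset α → C),
      M ≤ #S → ∃ A ⊆ S, ∃ T ⊆ S, #A = L ∧ t ≤ #T ∧ (∀ a ∈ A, ∀ b ∈ T, a < b) ∧
        IsEndHomogeneous χ d A (A ∪ T) := by
  induction L with
  | zero => exact ⟨t, fun α _ S χ hS => ⟨∅, empty_subset _, S, Subset.rfl, rfl, hS, by simp,
      by simp [IsEndHomogeneous]⟩⟩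
  | succ L ih =>
    obtain ⟨N₁, hN₁⟩ := ih
    obtain ⟨N₂, hN₂⟩ := h N₁
    refine ⟨N₂ + 1, fun α _ S χ hS => ?_⟩
    have hne : S.Nonempty := card_pos.mp (by omega)
    set a := S.min' hne
    have haS : a ∈ S := min'_mem S hne
    obtain ⟨Y, hYS, hY, hYhom⟩ := hN₂ α (S.erase a) (fun e => χ (insert a e))
      (by rw [card_erase_of_mem haS]; omega)
    obtain ⟨A, hAY, T, hTY, hA, hT, hAT, hend⟩ := hN₁ α Y χ hY
    have ha : ∀ b ∈ Y, a < b := fun b hb => min'_lt_of_mem_erase_min' S hne (hYS hb)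
    have haA : a ∉ A := fun h => lt_irrefl a (ha a (hAY h))
    refine ⟨insert a A, insert_subset haS ((hAY.trans hYS).trans (erase_subset _ _)), T,
      (hTY.trans hYS).trans (erase_subset _ _), by rw [card_insert_of_notMem haA, hA], hT, ?_, ?_⟩
    · intro b hb c hc
      rcases mem_insert.mp hb with rfl | hbA
      exacts [ha c (hTY hc), hAT b hbA c hc]
    · rw [insert_union]
      exact hend.insert_of_lt subset_union_left (fun b hb => ha b (union_subset hAY hTY hb))
        (hYhom.mono (union_subset hAY hTY))

theorem RamseyProperty.succ [Finite C] (h : RamseyProperty.{u} C d) :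
    RamseyProperty.{u} C (d + 1) := by
  intro m
  obtain ⟨M, hM⟩ := h.exists_isEndHomogeneous (Nat.card C * m + 1) d
  refine ⟨M, fun α _ S χ hS => ?_⟩
  obtain ⟨A, hAS, T, -, hA, hT, hAT, hend⟩ := hM α S χ hS
  obtain ⟨Y, hYA, hY, hYhom⟩ := hend.exists_isHomogeneous (m := m) hAT hT (by omega)
  exact ⟨Y, hYA.trans hAS, hY, hYhom⟩

theorem ramseyProperty (C : Type v) [Finite C] (d : ℕ) : RamseyProperty.{u} C d := by
  induction d with
  | zero => exact fun m => ⟨m, fun _ _ S χ hS => ⟨S, Subset.rfl, hS, isHomogeneous_zero χ S⟩⟩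
  | succ d ih => exact ih.succ

theorem exists_isHomogeneous_of_lt (C : ℕ → Type v) [∀ d, Finite (C d)] (D m : ℕ) :
    ∃ N : ℕ, ∀ (α : Type u) [LinearOrder α] (S : Finset α) (χ : ∀ d, Finset α → C d),
      N ≤ #S → ∃ Y ⊆ S, m ≤ #Y ∧ ∀ d < D, IsHomogeneous (χ d) d Y := by
  induction D generalizing m with
  | zero => exact ⟨m, fun _ _ S _ hS => ⟨S, Subset.rfl, hS, by simp⟩⟩
  | succ D ih =>
    obtain ⟨N₁, hN₁⟩ := ih m
    obtain ⟨N₂, hN₂⟩ := ramseyProperty.{u} (C D) D N₁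
    refine ⟨N₂, fun α _ S χ hS => ?_⟩
    obtain ⟨Y₁, hY₁S, hY₁, hY₁hom⟩ := hN₂ α S (χ D) hS
    obtain ⟨Y, hYY₁, hY, hYhom⟩ := hN₁ α Y₁ χ hY₁
    refine ⟨Y, hYY₁.trans hY₁S, hY, fun d hd => ?_⟩
    rcases Nat.lt_succ_iff_lt_or_eq.mp hd with hd | rfl
    exacts [hYhom d hd, hY₁hom.mono hYY₁]

end RamseyProperty

section Pattern

variable {X : Type} [LinearOrder X] {n : ℕ}

theorem OrderTypeEquiv.refl (x : Fin n → X) : OrderTypeEquiv x x :=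
  fun _ _ _ => ⟨Iff.rfl, Iff.rfl⟩

theorem OrderTypeEquiv.lt_iff_lt {x y : Fin n → X} (h : OrderTypeEquiv x y) (i j : Fin n) :
    x i < x j ↔ y i < y j := by
  rcases lt_trichotomy i j with hij | rfl | hji
  · exact (h i j hij).1
  · simp
  · rw [lt_iff_not_ge, le_iff_lt_or_eq, (h j i hji).1, (h j i hji).2, ← le_iff_lt_or_eq,
      ← lt_iff_not_ge]

theorem OrderTypeEquiv.eq_iff_eq {x y : Fin n → X} (h : OrderTypeEquiv x y) (i j : Fin n) :
    x i = x j ↔ y i = y j := by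
  rcases lt_trichotomy i j with hij | rfl | hji
  · exact (h i j hij).2
  · simp
  · rw [eq_comm, (h j i hji).2, eq_comm]

theorem exists_pattern (x : Fin n → X) :
    ∃ p : Fin n → Fin #(univ.image x), ∀ y : Fin n → X, OrderTypeEquiv x y →
      ∃ h : #(univ.image y) = #(univ.image x), ∀ j, y j = (univ.image y).orderEmbOfFin h (p j) := by
  set V := univ.image x
  have hxV : ∀ j, x j ∈ V := fun j => mem_image_of_mem x (mem_univ j)
  choose idx _ hidx using fun q => mem_image.mp (V.orderEmbOfFin_mem rfl q)
  set p : Fin n → Fin #V := fun j => (V.orderIsoOfFin rfl).symm ⟨x j, hxV j⟩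
  have hp : ∀ j, x (idx (p j)) = x j := fun j => by
    rw [hidx, ← coe_orderIsoOfFin_apply, OrderIso.apply_symm_apply]
  refine ⟨p, fun y hxy => ?_⟩
  -- `q ↦ y (idx q)` is an increasing enumeration of the entries of `y`, hence the canonical one.
  have hmono : StrictMono fun q => y (idx q) := fun q q' hqq' => by
    rw [← hxy.lt_iff_lt, hidx, hidx]
    exact (V.orderEmbOfFin rfl).strictMono hqq'
  have hy : ∀ j, y (idx (p j)) = y j := fun j => (hxy.eq_iff_eq _ _).mp (hp j)
  have himage : univ.image y = univ.image fun q => y (idx q) := by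
    ext z
    simp only [mem_image, mem_univ, true_and]
    exact ⟨fun ⟨j, hj⟩ => ⟨_, (hy j).trans hj⟩, fun ⟨q, hq⟩ => ⟨idx q, hq⟩⟩
  have hcard : #(univ.image y) = #V := by
    rw [himage, card_image_of_injective _ hmono.injective, card_univ, Fintype.card_fin]
  refine ⟨hcard, fun j => ?_⟩
  have henum := orderEmbOfFin_unique hcard (fun q => himage ▸ mem_image_of_mem _ (mem_univ q)) hmono
  exact (hy j).symm.trans (congrFun henum _)

end Pattern

section Tuples

variable {X : Type} [LinearOrder X] {K : Type*} {r : ℕ} {n : Fin r → ℕ}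

-- `Option` provides a colour for sets of the wrong size even when `K` is empty.
noncomputable def patternColoring (f : ∀ i : Fin r, (Fin (n i) → X) → K) (d : ℕ) (A : Finset X) :
    Option (∀ i, (Fin (n i) → Fin d) → K) :=
  if h : #A = d then some fun i p => f i (A.orderEmbOfFin h ∘ p) else none

theorem patternColoring_of_card_eq (f : ∀ i : Fin r, (Fin (n i) → X) → K) {d : ℕ}
    {A : Finset X} (h : #A = d) :
    patternColoring f d A = some fun i p => f i (A.orderEmbOfFin h ∘ p) :=
  dif_pos h

theorem apply_eq_of_orderTypeEquiv {f : ∀ i : Fin r, (Fin (n i) → X) → K} {D : ℕ}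
    {Y : Finset X} (hY : ∀ d < D, IsHomogeneous (patternColoring f d) d Y) {i : Fin r}
    (hi : n i < D) {x y : Fin (n i) → X} (hx : ∀ j, x j ∈ Y) (hy : ∀ j, y j ∈ Y)
    (hxy : OrderTypeEquiv x y) : f i x = f i y := by
  obtain ⟨p, hp⟩ := exists_pattern x
  obtain ⟨hV, hpx⟩ := hp x (.refl x)
  obtain ⟨hW, hpy⟩ := hp y hxy
  have hsub : ∀ z : Fin (n i) → X, (∀ j, z j ∈ Y) → univ.image z ⊆ Y := fun z hz w hw => by
    obtain ⟨j, -, rfl⟩ := mem_image.mp hw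
    exact hz j
  have hd : #(univ.image x) < D := (card_image_le.trans (by simp)).trans_lt hi
  have hcol := hY _ hd _ (hsub x hx) _ (hsub y hy) hV hW
  rw [patternColoring_of_card_eq f hV, patternColoring_of_card_eq f hW] at hcol
  rw [funext hpx, funext hpy]
  exact congrFun (congrFun (Option.some.inj hcol) i) p

end Tuples

theorem ordered_ramsey_multi (k m r : ℕ) (n : Fin r → ℕ) :
    ∃ R : ℕ, ∀ (X : Type) (_ : LinearOrder X), (R : Cardinal) ≤ Cardinal.mk X →
      ∀ f : ∀ i : Fin r, (Fin (n i) → X) → Fin k,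
        ∃ Y : Set X, (m : Cardinal) ≤ Cardinal.mk Y ∧
          ∀ (i : Fin r) (x y : Fin (n i) → X), (∀ j, x j ∈ Y) → (∀ j, y j ∈ Y) →
            OrderTypeEquiv x y → f i x = f i y := by
  obtain ⟨N, hN⟩ := exists_isHomogeneous_of_lt.{0}
    (fun d => Option (∀ i, (Fin (n i) → Fin d) → Fin k)) (univ.sup n + 1) m
  refine ⟨N, fun X _ hX f => ?_⟩
  obtain ⟨g⟩ : Nonempty (Fin N ↪ X) := by rwa [← Cardinal.mk_fin N, Cardinal.le_def] at hX
  obtain ⟨Y, -, hY, hYhom⟩ := hN X (univ.map g) (patternColoring f) (by simp)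
  exact ⟨Y, by simpa using hY, fun i x y hx hy hxy =>
    apply_eq_of_orderTypeEquiv hYhom (Nat.lt_succ_of_le (le_sup (mem_univ i))) hx hy hxy⟩
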